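/- arXiv:0805.4227 — 2 statements merged into one kernel-verified Lean document; each statement's English description precedes it below -/
import Mathlib

section
/- Let c ≥ 0 be a real number and n ≥ 1 an integer. An element x = (x_0, …, x_{n−1}) ∈ W_n(R) belongs to the ideal [𝔞_R^{>c}] if and only if v(x_i) > p^i·c for all 0 ≤ i ≤ n−1; likewise, x belongs to [𝔞_R^{≥c}] if and only if v(x_i) ≥ p^i·c for all 0 ≤ i ≤ n−1. -/
/-!
The coefficients of `X + Y` and `X * Y` in `W(R)` are the Witt polynomials `S_k`, `P_k`, and these
are weighted homogeneous of degree `p ^ k` when the variable `X_i` gets weight `p ^ i` (for `P_k`,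
the variables of one factor get weight `0`): solving the ghost identity for `p ^ k * S_k` shows this
by induction on `k`. Since `v` is nonnegative on integers, the condition `v (x_i) ≥ p ^ i * c` for
all `i` therefore cuts out an ideal of `W_n(R)`, and it contains the generators `[y]`, `v y ≥ c`.
Conversely, as `R` is perfect, `x = ∑_{i<n} [x_i ^ p^{-i}] p ^ i` in `W_n(R)`, and
`v (x_i ^ p^{-i}) = p^{-i} v (x_i) ≥ c`. The strict case reduces to this one: `[𝔞^{>c}]` is the
union of the `[𝔞^{≥d}]` for `d > c`, and only the finitely many coefficients `x_i`, `i < n`, occur.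
-/

/-- The Teichmüller representative of `y` in the truncated Witt vector ring `W_n(R)`. -/
noncomputable def truncTeichmuller (p n : ℕ) [hp : Fact p.Prime] {R : Type*} [CommRing R]
    (y : R) : TruncatedWittVector p n R :=
  WittVector.truncate n (WittVector.teichmuller p y)

/-- The ideal `[𝔞_R^{>c}]` of `W_n(R)`: generated by Teichmüller representatives of
elements of valuation `> c`. -/
noncomputable def idealGT (p n : ℕ) [hp : Fact p.Prime] {R : Type*} [CommRing R]
    (v : R → WithTop ℝ) (c : ℝ) : Ideal (TruncatedWittVector p n R) :=
  Ideal.span {z | ∃ y : R, (c : WithTop ℝ) < v y ∧ z = truncTeichmuller p n y}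

/-- The ideal `[𝔞_R^{≥c}]` of `W_n(R)`: generated by Teichmüller representatives of
elements of valuation `≥ c`. -/
noncomputable def idealGE (p n : ℕ) [hp : Fact p.Prime] {R : Type*} [CommRing R]
    (v : R → WithTop ℝ) (c : ℝ) : Ideal (TruncatedWittVector p n R) :=
  Ideal.span {z | ∃ y : R, (c : WithTop ℝ) ≤ v y ∧ z = truncTeichmuller p n y}

open MvPolynomial

section Valuation

variable {R : Type*} [CommRing R] {v : R → WithTop ℝ}

theorem le_valuation_sum (hv0 : v 0 = ⊤) (hvadd : ∀ x y : R, min (v x) (v y) ≤ v (x + y))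
    {ι : Type*} (s : Finset ι) (f : ι → R) {a : WithTop ℝ} (h : ∀ i ∈ s, a ≤ v (f i)) :
    a ≤ v (∑ i ∈ s, f i) := by
  classical
  induction s using Finset.induction_on with
  | empty => simp [hv0]
  | insert j s hj ih =>
    rw [Finset.sum_insert hj]
    refine (le_min (h j (s.mem_insert_self j)) (ih fun i hi => h i ?_)).trans (hvadd _ _)
    exact Finset.mem_insert_of_mem hi

theorem nsmul_le_valuation_pow (hvmul : ∀ x y : R, v (x * y) = v x + v y)
    (hvnonneg : ∀ x : R, 0 ≤ v x) (x : R) (m : ℕ) : m • v x ≤ v (x ^ m) := by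
  induction m with
  | zero => simpa using hvnonneg 1
  | succ m ih => rw [succ_nsmul, pow_succ, hvmul]; exact add_le_add_left ih _

theorem valuation_pow (hvmul : ∀ x y : R, v (x * y) = v x + v y) (x : R) {m : ℕ} (hm : m ≠ 0) :
    v (x ^ m) = m • v x := by
  induction m, Nat.one_le_iff_ne_zero.mpr hm using Nat.le_induction with
  | base => simp
  | succ m hm ih => rw [pow_succ, hvmul, ih (by omega), succ_nsmul]

theorem sum_nsmul_le_valuation_prod (hvmul : ∀ x y : R, v (x * y) = v x + v y)
    (hvnonneg : ∀ x : R, 0 ≤ v x) {ι : Type*} (s : Finset ι) (x : ι → R) (e : ι → ℕ) :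
    ∑ i ∈ s, e i • v (x i) ≤ v (∏ i ∈ s, x i ^ e i) := by
  classical
  induction s using Finset.induction_on with
  | empty => simpa using hvnonneg 1
  | insert j s hj ih =>
    rw [Finset.sum_insert hj, Finset.prod_insert hj, hvmul]
    exact add_le_add (nsmul_le_valuation_pow hvmul hvnonneg _ _) ih

theorem le_valuation_aeval_of_isWeightedHomogeneous (hv0 : v 0 = ⊤)
    (hvmul : ∀ x y : R, v (x * y) = v x + v y) (hvadd : ∀ x y : R, min (v x) (v y) ≤ v (x + y))
    (hvnonneg : ∀ x : R, 0 ≤ v x) {σ : Type*} {P : MvPolynomial σ ℤ} {w : σ → ℕ} {D : ℕ}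
    (hP : IsWeightedHomogeneous w P D) (x : σ → R) (c : ℝ)
    (hx : ∀ s ∈ P.vars, (((w s : ℝ) * c : ℝ) : WithTop ℝ) ≤ v (x s)) :
    (((D : ℝ) * c : ℝ) : WithTop ℝ) ≤ v (aeval x P) := by
  rw [aeval_def, eval₂_eq]
  refine le_valuation_sum hv0 hvadd _ _ fun d hd => ?_
  have hD : ∑ s ∈ d.support, d s * w s = D := by
    rw [← hP (mem_support_iff.mp hd), Finsupp.weight_apply, Finsupp.sum]
    rfl
  calc (((D : ℝ) * c : ℝ) : WithTop ℝ)
      = ∑ s ∈ d.support, d s • (((w s : ℝ) * c : ℝ) : WithTop ℝ) := by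
        simp_rw [← WithTop.coe_nsmul, ← WithTop.coe_sum, ← hD, WithTop.coe_eq_coe, nsmul_eq_mul]
        push_cast
        rw [Finset.sum_mul]
        exact Finset.sum_congr rfl fun s _ => by ring
    _ ≤ ∑ s ∈ d.support, d s • v (x s) := Finset.sum_le_sum fun s hs =>
        nsmul_le_nsmul_right (hx s ((mem_vars_iff_mem_support s).mpr ⟨d, hd, hs⟩)) _
    _ ≤ v (∏ s ∈ d.support, x s ^ d s) := sum_nsmul_le_valuation_prod hvmul hvnonneg _ _ _
    _ ≤ v (algebraMap ℤ R (coeff d P)) + v (∏ s ∈ d.support, x s ^ d s) :=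
        le_add_of_nonneg_left (hvnonneg _)
    _ = _ := (hvmul _ _).symm

end Valuation

theorem WithTop.coe_le_of_coe_mul_le_nsmul {m : ℕ} (hm : m ≠ 0) {c : ℝ} {w : WithTop ℝ}
    (h : (((m : ℝ) * c : ℝ) : WithTop ℝ) ≤ m • w) : (c : WithTop ℝ) ≤ w := by
  induction w using WithTop.recTopCoe with
  | top => exact le_top
  | coe t =>
    rw [← WithTop.coe_nsmul, WithTop.coe_le_coe, nsmul_eq_mul] at h
    exact WithTop.coe_le_coe.mpr (le_of_mul_le_mul_left h (by positivity))

theorem exists_lt_forall_coe_mul_le_iff {ι : Type*} [Finite ι] {a : ι → ℝ} (ha : ∀ i, 0 < a i)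
    (f : ι → WithTop ℝ) (c : ℝ) :
    (∃ d, c < d ∧ ∀ i, ((a i * d : ℝ) : WithTop ℝ) ≤ f i) ↔
      ∀ i, ((a i * c : ℝ) : WithTop ℝ) < f i := by
  refine ⟨fun ⟨d, hcd, hd⟩ i => ?_, fun h => ?_⟩
  · exact (WithTop.coe_lt_coe.mpr (mul_lt_mul_of_pos_left hcd (ha i))).trans_le (hd i)
  · have hev : ∀ i, ∀ᶠ d in nhdsWithin c (Set.Ioi c), ((a i * d : ℝ) : WithTop ℝ) ≤ f i := by
      intro i
      induction hf : f i using WithTop.recTopCoe with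
      | top => exact Filter.Eventually.of_forall fun _ => le_top
      | coe t =>
        have hct : c < t / a i := by
          rw [lt_div_iff₀ (ha i), mul_comm, ← WithTop.coe_lt_coe, ← hf]
          exact h i
        filter_upwards [nhdsWithin_le_nhds (eventually_lt_nhds hct)] with d hd
        exact WithTop.coe_le_coe.mpr ((lt_div_iff₀' (ha i)).mp hd).le
    obtain ⟨d, hd, hcd⟩ :=
      ((Filter.eventually_all.mpr hev).and self_mem_nhdsWithin).exists
    exact ⟨d, hcd, hd⟩

theorem MvPolynomial.IsWeightedHomogeneous.of_C_mul {σ R M : Type*} [CommRing R] [NoZeroDivisors R]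
    [AddCommMonoid M] {w : σ → M} {φ : MvPolynomial σ R} {m : M} {r : R} (hr : r ≠ 0)
    (h : IsWeightedHomogeneous w (C r * φ) m) : IsWeightedHomogeneous w φ m := fun d hd =>
  h (by rw [coeff_C_mul]; exact mul_ne_zero hr hd)

namespace WittVector

theorem isWeightedHomogeneous_rename_wittPolynomial {p : ℕ} {idx : Type*} {w : idx × ℕ → ℕ}
    {b : idx} {e : ℕ} (hw : ∀ i, w (b, i) = e * p ^ i) (n : ℕ) :
    IsWeightedHomogeneous w (rename (Prod.mk b) (wittPolynomial p ℤ n)) (e * p ^ n) := by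
  rw [wittPolynomial_eq_sum_C_mul_X_pow, map_sum]
  refine IsWeightedHomogeneous.sum _ _ _ fun i hi => ?_
  have hin : i ≤ n := Nat.lt_succ_iff.mp (Finset.mem_range.mp hi)
  have hX := ((isWeightedHomogeneous_X ℤ w (b, i)).pow (p ^ (n - i))).C_mul ((p : ℤ) ^ i)
  rw [hw, smul_eq_mul, mul_left_comm, ← pow_add, Nat.sub_add_cancel hin] at hX
  simpa using hX

variable {p : ℕ} [hp : Fact p.Prime]

theorem isWeightedHomogeneous_wittStructureInt {idx : Type*} (Φ : MvPolynomial idx ℤ)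
    {w : idx × ℕ → ℕ}
    (hΦ : ∀ n, IsWeightedHomogeneous w
      (bind₁ (fun b => rename (Prod.mk b) (wittPolynomial p ℤ n)) Φ) (p ^ n))
    (n : ℕ) : IsWeightedHomogeneous w (wittStructureInt p Φ n) (p ^ n) := by
  induction n using Nat.strong_induction_on with
  | _ n ih =>
  have hghost := wittStructureInt_prop p Φ n
  rw [bind₁, aeval_wittPolynomial, Finset.sum_range_succ, Nat.sub_self, pow_zero, pow_one,
    ← eq_sub_iff_add_eq'] at hghost
  have hpn : ((p : MvPolynomial (idx × ℕ) ℤ)) ^ n = C ((p : ℤ) ^ n) := by simp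
  rw [hpn] at hghost
  refine IsWeightedHomogeneous.of_C_mul (r := (p : ℤ) ^ n)
    (pow_ne_zero n (by exact_mod_cast hp.out.ne_zero)) ?_
  rw [hghost]
  refine (hΦ n).sub (IsWeightedHomogeneous.sum _ _ _ fun i hi => ?_)
  have hi : i < n := Finset.mem_range.mp hi
  have := ((ih i hi).pow (p ^ (n - i))).C_mul ((p : ℤ) ^ i)
  rw [smul_eq_mul, ← pow_add, Nat.sub_add_cancel hi.le] at this
  simpa using this

theorem isWeightedHomogeneous_wittAdd (n : ℕ) :
    IsWeightedHomogeneous (fun s : Fin 2 × ℕ => p ^ s.2) (wittAdd p n) (p ^ n) := by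
  refine isWeightedHomogeneous_wittStructureInt _ (fun n => ?_) n
  have h (b : Fin 2) := isWeightedHomogeneous_rename_wittPolynomial
    (w := fun s : Fin 2 × ℕ => p ^ s.2) (b := b) (e := 1) (fun i => (one_mul _).symm) n
  simp only [one_mul] at h
  simpa [bind₁_X_right] using (h 0).add (h 1)

theorem isWeightedHomogeneous_wittMul (n : ℕ) :
    IsWeightedHomogeneous (fun s : Fin 2 × ℕ => ![0, 1] s.1 * p ^ s.2) (wittMul p n) (p ^ n) := by
  refine isWeightedHomogeneous_wittStructureInt _ (fun n => ?_) n
  have h (b : Fin 2) := isWeightedHomogeneous_rename_wittPolynomial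
    (w := fun s : Fin 2 × ℕ => ![0, 1] s.1 * p ^ s.2) (b := b) (fun i => rfl) n
  simpa [bind₁_X_right] using (h 0).mul (h 1)

variable {R : Type*} [CommRing R] {v : R → WithTop ℝ}

theorem le_valuation_coeff_add (hv0 : v 0 = ⊤) (hvmul : ∀ x y : R, v (x * y) = v x + v y)
    (hvadd : ∀ x y : R, min (v x) (v y) ≤ v (x + y)) (hvnonneg : ∀ x : R, 0 ≤ v x)
    {X Y : WittVector p R} {c : ℝ} {k : ℕ}
    (hX : ∀ j ≤ k, (((p : ℝ) ^ j * c : ℝ) : WithTop ℝ) ≤ v (X.coeff j))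
    (hY : ∀ j ≤ k, (((p : ℝ) ^ j * c : ℝ) : WithTop ℝ) ≤ v (Y.coeff j)) :
    (((p : ℝ) ^ k * c : ℝ) : WithTop ℝ) ≤ v ((X + Y).coeff k) := by
  have h := le_valuation_aeval_of_isWeightedHomogeneous hv0 hvmul hvadd hvnonneg
    (isWeightedHomogeneous_wittAdd (p := p) k) (Function.uncurry ![X.coeff, Y.coeff]) c ?_
  · simpa [add_coeff, peval] using h
  rintro ⟨b, j⟩ hs
  have hj : j ≤ k := by
    simpa [Nat.lt_succ_iff] using (Finset.mem_product.mp (wittAdd_vars p k hs)).2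
  fin_cases b
  · simpa using hX j hj
  · simpa using hY j hj

theorem le_valuation_coeff_mul (hv0 : v 0 = ⊤) (hvmul : ∀ x y : R, v (x * y) = v x + v y)
    (hvadd : ∀ x y : R, min (v x) (v y) ≤ v (x + y)) (hvnonneg : ∀ x : R, 0 ≤ v x)
    (Y : WittVector p R) {X : WittVector p R} {c : ℝ} {k : ℕ}
    (hX : ∀ j ≤ k, (((p : ℝ) ^ j * c : ℝ) : WithTop ℝ) ≤ v (X.coeff j)) :
    (((p : ℝ) ^ k * c : ℝ) : WithTop ℝ) ≤ v ((Y * X).coeff k) := by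
  have h := le_valuation_aeval_of_isWeightedHomogeneous hv0 hvmul hvadd hvnonneg
    (isWeightedHomogeneous_wittMul (p := p) k) (Function.uncurry ![Y.coeff, X.coeff]) c ?_
  · simpa [mul_coeff, peval] using h
  rintro ⟨b, j⟩ hs
  have hj : j ≤ k := by
    simpa [Nat.lt_succ_iff] using (Finset.mem_product.mp (wittMul_vars p k hs)).2
  fin_cases b
  · simpa using hvnonneg _
  · simpa using hX j hj

variable [CharP R p]

theorem coeff_sum_teichmuller_mul_pow (s : Finset ℕ) (b : ℕ → R) (j : ℕ) :
    (∑ i ∈ s, teichmuller p (b i) * (p : WittVector p R) ^ i).coeff j =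
      if j ∈ s then b j ^ p ^ j else 0 := by
  have hterm (i m : ℕ) : (teichmuller p (b i) * (p : WittVector p R) ^ i).coeff m =
      if m = i then b i ^ p ^ i else 0 := by
    split_ifs with h
    · rw [h, teichmuller_mul_pow_coeff]
    · exact teichmuller_mul_pow_coeff_of_ne _ h
  rw [sum_coeff_eq_coeff_sum _ fun m => ⟨fun r r' => Subtype.ext ?_⟩]
  · simp_rw [hterm, Finset.sum_ite_eq]
  · have h₁ := r.2.2
    have h₂ := r'.2.2
    rw [hterm] at h₁ h₂
    exact ((ite_ne_right_iff.mp h₁).1).symm.trans (ite_ne_right_iff.mp h₂).1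

theorem truncate_eq_sum_teichmuller_mul_pow [PerfectRing R p] (n : ℕ) (X : WittVector p R) :
    truncate n X = truncate n (∑ i ∈ Finset.range n, teichmuller p
      ((iterateFrobeniusEquiv R p i).symm (X.coeff i)) * (p : WittVector p R) ^ i) := by
  ext j
  rw [coeff_truncate, coeff_truncate, coeff_sum_teichmuller_mul_pow,
    if_pos (Finset.mem_range.mpr j.isLt), ← iterateFrobeniusEquiv_def,
    RingEquiv.apply_symm_apply]

end WittVector

section Ideals

variable {p n : ℕ} [hp : Fact p.Prime] {R : Type*} [CommRing R] {v : R → WithTop ℝ}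

theorem mem_idealGE_of_forall_le_valuation_coeff [CharP R p] [PerfectRing R p]
    (hvmul : ∀ x y : R, v (x * y) = v x + v y) {c : ℝ} {x : TruncatedWittVector p n R}
    (hx : ∀ i : Fin n, (((p : ℝ) ^ (i : ℕ) * c : ℝ) : WithTop ℝ) ≤ v (x.coeff i)) :
    x ∈ idealGE p n v c := by
  obtain ⟨X, rfl⟩ := WittVector.truncate_surjective p n R x
  rw [WittVector.truncate_eq_sum_teichmuller_mul_pow, map_sum]
  refine Ideal.sum_mem _ fun i hi => ?_
  rw [map_mul]
  refine Ideal.mul_mem_right _ _ (Ideal.subset_span ⟨_, ?_, rfl⟩)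
  set y := (iterateFrobeniusEquiv R p i).symm (X.coeff i)
  have hy : y ^ p ^ i = X.coeff i := (iterateFrobeniusEquiv R p i).apply_symm_apply _
  have hpi : p ^ i ≠ 0 := pow_ne_zero i hp.out.ne_zero
  refine WithTop.coe_le_of_coe_mul_le_nsmul hpi ?_
  have h := hx ⟨i, Finset.mem_range.mp hi⟩
  rwa [WittVector.coeff_truncate, ← hy, valuation_pow hvmul y hpi, ← Nat.cast_pow] at h

theorem forall_le_valuation_coeff_of_mem_idealGE (hv0 : v 0 = ⊤)
    (hvmul : ∀ x y : R, v (x * y) = v x + v y) (hvadd : ∀ x y : R, min (v x) (v y) ≤ v (x + y))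
    (hvnonneg : ∀ x : R, 0 ≤ v x) {c : ℝ} {x : TruncatedWittVector p n R}
    (hx : x ∈ idealGE p n v c) :
    ∀ i : Fin n, (((p : ℝ) ^ (i : ℕ) * c : ℝ) : WithTop ℝ) ≤ v (x.coeff i) := by
  have hlift {X : WittVector p R} {k : ℕ} (hk : k < n)
      (hX : ∀ i : Fin n, (((p : ℝ) ^ (i : ℕ) * c : ℝ) : WithTop ℝ) ≤
        v ((WittVector.truncate n X).coeff i)) :
      ∀ j ≤ k, (((p : ℝ) ^ j * c : ℝ) : WithTop ℝ) ≤ v (X.coeff j) := fun j hj => by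
    simpa using hX ⟨j, hj.trans_lt hk⟩
  induction hx using Submodule.span_induction with
  | mem z hz =>
    obtain ⟨y, hy, rfl⟩ := hz
    rintro ⟨_ | i, hi⟩
    · simpa [truncTeichmuller] using hy
    · simp [truncTeichmuller, WittVector.teichmuller_coeff_pos, hv0]
  | zero => simp [hv0]
  | add x y _ _ hx hy =>
    obtain ⟨X, rfl⟩ := WittVector.truncate_surjective p n R x
    obtain ⟨Y, rfl⟩ := WittVector.truncate_surjective p n R y
    intro i
    rw [← map_add, WittVector.coeff_truncate]
    exact WittVector.le_valuation_coeff_add hv0 hvmul hvadd hvnonneg (hlift i.isLt hx)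
      (hlift i.isLt hy)
  | smul a x _ hx =>
    obtain ⟨A, rfl⟩ := WittVector.truncate_surjective p n R a
    obtain ⟨X, rfl⟩ := WittVector.truncate_surjective p n R x
    intro i
    rw [smul_eq_mul, ← map_mul, WittVector.coeff_truncate]
    exact WittVector.le_valuation_coeff_mul hv0 hvmul hvadd hvnonneg A (hlift i.isLt hx)

theorem mem_idealGE_iff [CharP R p] [PerfectRing R p] (hv0 : v 0 = ⊤)
    (hvmul : ∀ x y : R, v (x * y) = v x + v y) (hvadd : ∀ x y : R, min (v x) (v y) ≤ v (x + y))
    (hvnonneg : ∀ x : R, 0 ≤ v x) (c : ℝ) (x : TruncatedWittVector p n R) :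
    x ∈ idealGE p n v c ↔ ∀ i : Fin n, (((p : ℝ) ^ (i : ℕ) * c : ℝ) : WithTop ℝ) ≤ v (x.coeff i) :=
  ⟨forall_le_valuation_coeff_of_mem_idealGE hv0 hvmul hvadd hvnonneg,
    mem_idealGE_of_forall_le_valuation_coeff hvmul⟩

theorem idealGE_anti {c d : ℝ} (hcd : c ≤ d) : idealGE p n v d ≤ idealGE p n v c := by
  refine Ideal.span_mono ?_
  rintro _ ⟨y, hy, rfl⟩
  exact ⟨y, (WithTop.coe_le_coe.mpr hcd).trans hy, rfl⟩

theorem mem_idealGT_iff_exists_mem_idealGE {c : ℝ} {x : TruncatedWittVector p n R} :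
    x ∈ idealGT p n v c ↔ ∃ d, c < d ∧ x ∈ idealGE p n v d := by
  refine ⟨fun hx => ?_, fun ⟨d, hcd, hx⟩ => ?_⟩
  · induction hx using Submodule.span_induction with
    | mem z hz =>
      obtain ⟨y, hy, rfl⟩ := hz
      induction hvy : v y using WithTop.recTopCoe with
      | top => exact ⟨c + 1, lt_add_one c, Ideal.subset_span ⟨y, by simp [hvy], rfl⟩⟩
      | coe t => exact ⟨t, by simpa [hvy] using hy, Ideal.subset_span ⟨y, hvy.ge, rfl⟩⟩
    | zero => exact ⟨c + 1, lt_add_one c, zero_mem _⟩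
    | add x y _ _ hx hy =>
      obtain ⟨d, hcd, hx⟩ := hx
      obtain ⟨d', hcd', hy⟩ := hy
      exact ⟨min d d', lt_min hcd hcd', add_mem (idealGE_anti (min_le_left d d') hx)
        (idealGE_anti (min_le_right d d') hy)⟩
    | smul a x _ hx =>
      obtain ⟨d, hcd, hx⟩ := hx
      exact ⟨d, hcd, Ideal.mul_mem_left _ a hx⟩
  · refine Ideal.span_mono ?_ hx
    rintro _ ⟨y, hy, rfl⟩
    exact ⟨y, (WithTop.coe_lt_coe.mpr hcd).trans_le hy, rfl⟩

end Ideals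

theorem mem_idealGT_iff_and_mem_idealGE_iff_general
    (p : ℕ) [hp : Fact p.Prime] {R : Type*} [CommRing R] [CharP R p] [PerfectRing R p]
    (v : R → WithTop ℝ)
    (hv0 : v 0 = ⊤)
    (hvmul : ∀ x y : R, v (x * y) = v x + v y)
    (hvadd : ∀ x y : R, min (v x) (v y) ≤ v (x + y))
    (hvnonneg : ∀ x : R, 0 ≤ v x)
    (c : ℝ) (n : ℕ) (x : TruncatedWittVector p n R) :
    (x ∈ idealGT p n v c ↔ ∀ i : Fin n, ((p : ℝ) ^ (i : ℕ) * c : ℝ) < v (x.coeff i)) ∧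
    (x ∈ idealGE p n v c ↔ ∀ i : Fin n, (((p : ℝ) ^ (i : ℕ) * c : ℝ) : WithTop ℝ) ≤ v (x.coeff i)) := by
  have hGE := mem_idealGE_iff (n := n) hv0 hvmul hvadd hvnonneg
  refine ⟨?_, hGE c x⟩
  simp_rw [mem_idealGT_iff_exists_mem_idealGE, hGE]
  exact exists_lt_forall_coe_mul_le_iff (fun i => pow_pos (Nat.cast_pos.mpr hp.out.pos) _) _ c

theorem mem_idealGT_iff_and_mem_idealGE_iff
    (p : ℕ) [hp : Fact p.Prime] {R : Type*} [CommRing R] [CharP R p] [PerfectRing R p]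
    (v : R → WithTop ℝ)
    (hv0 : v 0 = ⊤)
    (hvmul : ∀ x y : R, v (x * y) = v x + v y)
    (hvadd : ∀ x y : R, min (v x) (v y) ≤ v (x + y))
    (hvnonneg : ∀ x : R, 0 ≤ v x)
    (c : ℝ) (hc : 0 ≤ c) (n : ℕ) (hn : 1 ≤ n) (x : TruncatedWittVector p n R) :
    (x ∈ idealGT p n v c ↔ ∀ i : Fin n, ((p : ℝ) ^ (i : ℕ) * c : ℝ) < v (x.coeff i)) ∧
    (x ∈ idealGE p n v c ↔ ∀ i : Fin n, (((p : ℝ) ^ (i : ℕ) * c : ℝ) : WithTop ℝ) ≤ v (x.coeff i)) :=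
  mem_idealGT_iff_and_mem_idealGE_iff_general p (hp := hp) v hv0 hvmul hvadd hvnonneg c n x
end

section
/- Let c > 0 be a real number and let n ≥ 1, s ≥ 0 be integers such that p^{s−n+1}·v(p) > c. Let W_n(θ_s) : W_n(R) → W_n(O/p) be the ring homomorphism of length-n p-typical Witt vectors induced by θ_s, and let J ⊆ W_n(O/p) be the ideal generated by the Teichmüller representatives [ȳ] of classes ȳ ∈ O/p of elements y ∈ O with v(y) > c/p^s. Then the composite W_n(R) → W_n(O/p) → W_n(O/p)/J is surjective with kernel equal to [𝔞_R^{>c}], the ideal of W_n(R) generated by the Teichmüller representatives of elements x ∈ R with v_R(x) > c; hence it induces a ring isomorphism W_n(R)/[𝔞_R^{>c}] ≅ W_n(O/p)/J. -/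
/-!
Statement 9 (Proposition 2.9 of Caruso–Liu).  `K` is an algebraically closed field with
an additive valuation `v` with `0 < v p < ∞`, `O` its valuation ring,
`R = lim_{x↦x^p} O/p` the tilt with its valuation `v_R`, and `θ_s : R → O/p` the `s`-th
projection.  If `p^{s-n+1}·v(p) > c > 0` then the composite
`W_n(R) → W_n(O/p) → W_n(O/p)/J` induced by `θ_s` — where `J` is the ideal generated by
Teichmüller representatives `[ȳ]` of classes of elements `y ∈ O` with `v y > c/p^s` —
is surjective with kernel `[𝔞_R^{>c}]`, hence induces a ring isomorphism
`W_n(R)/[𝔞_R^{>c}] ≅ W_n(O/p)/J`.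
-/

noncomputable section

/-- The axioms for an additive valuation on a field `K`, with `0 < v p < ∞`. -/
structure ValAx (p : ℕ) (K : Type*) [Field K] (v : K → WithTop ℝ) : Prop where
  map_mul : ∀ x y : K, v (x * y) = v x + v y
  min_le_map_add : ∀ x y : K, min (v x) (v y) ≤ v (x + y)
  top_iff : ∀ x : K, v x = ⊤ ↔ x = 0
  vp_pos : 0 < v (p : K)
  vp_ne_top : v (p : K) ≠ ⊤

namespace Tilt

variable {p : ℕ} {K : Type*} [Field K] {v : K → WithTop ℝ}

theorem v_one_eq_zero (hv : ValAx p K v) : v 1 = 0 := by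
  have h : v 1 = v 1 + v 1 := by
    conv_lhs => rw [show (1 : K) = 1 * 1 by ring]
    exact hv.map_mul 1 1
  have hne : v 1 ≠ ⊤ := fun h' => one_ne_zero ((hv.top_iff 1).1 h')
  obtain ⟨r, hr⟩ := WithTop.ne_top_iff_exists.mp hne
  rw [← hr] at h
  rw [← hr]
  norm_cast at h ⊢
  linarith

theorem v_neg (hv : ValAx p K v) (x : K) : v (-x) = v x := by
  have hm1 : v (-1 : K) = 0 := by
    have h : v (-1 : K) + v (-1 : K) = 0 := by
      rw [← hv.map_mul]; norm_num [v_one_eq_zero hv]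
    rcases eq_or_ne (v (-1 : K)) ⊤ with h' | h'
    · rw [h'] at h; simp at h
    · obtain ⟨r, hr⟩ := WithTop.ne_top_iff_exists.mp h'
      rw [← hr] at h ⊢; norm_cast at h ⊢; linarith
  calc v (-x) = v ((-1) * x) := by ring_nf
  _ = v (-1 : K) + v x := hv.map_mul _ _
  _ = v x := by rw [hm1, zero_add]

/-- The valuation ring `O = {x ∈ K : v x ≥ 0}`. -/
def O (p : ℕ) (v : K → WithTop ℝ) (hv : ValAx p K v) : Subring K where
  carrier := {x | 0 ≤ v x}
  one_mem' := le_of_eq (v_one_eq_zero hv).symm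
  mul_mem' := fun {x y} hx hy => by
    simpa only [Set.mem_setOf_eq, hv.map_mul] using add_nonneg hx hy
  zero_mem' := by simp only [Set.mem_setOf_eq, (hv.top_iff 0).2 rfl]; exact le_top
  add_mem' := fun {x y} hx hy => le_trans (le_min hx hy) (hv.min_le_map_add x y)
  neg_mem' := fun {x} hx => by simpa only [Set.mem_setOf_eq, v_neg hv] using hx

/-- The ideal `pO` of `O`. -/
def pIdeal (p : ℕ) (v : K → WithTop ℝ) (hv : ValAx p K v) : Ideal (O p v hv) :=
  Ideal.span {(p : O p v hv)}

theorem pIdeal_ne_top (hv : ValAx p K v) : pIdeal p v hv ≠ ⊤ := by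
  intro h
  rw [Ideal.eq_top_iff_one, pIdeal, Ideal.mem_span_singleton] at h
  obtain ⟨a, ha⟩ := h
  have ha' : (1 : K) = (p : K) * (a : K) := by
    have := congrArg (fun z : O p v hv => (z : K)) ha
    push_cast at this
    exact this
  have h0 : (0 : WithTop ℝ) = v ((p : K) * (a : K)) := by
    rw [← ha', v_one_eq_zero hv]
  rw [hv.map_mul] at h0
  have : (0 : WithTop ℝ) < v (p : K) + v (a : K) :=
    lt_of_lt_of_le hv.vp_pos (le_add_of_nonneg_right a.2)
  rw [← h0] at this
  exact lt_irrefl _ this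

theorem charP_quotient (hv : ValAx p K v) [Fact p.Prime] :
    CharP (O p v hv ⧸ pIdeal p v hv) p := by
  haveI : Nontrivial (O p v hv ⧸ pIdeal p v hv) :=
    Ideal.Quotient.nontrivial_iff.mpr (pIdeal_ne_top hv)
  refine (CharP.charP_iff_prime_eq_zero Fact.out).2 ?_
  rw [← map_natCast (Ideal.Quotient.mk (pIdeal p v hv))]
  exact Ideal.Quotient.eq_zero_iff_mem.2 (Ideal.mem_span_singleton_self _)

/-- The tilt `R = lim_{x ↦ x^p} O/p`, as a subring of the product ring
`ℕ → O/p`: sequences `(x⁽⁰⁾, x⁽¹⁾, …)` with `(x⁽ˢ⁺¹⁾)^p = x⁽ˢ⁾`. -/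
def tilt (p : ℕ) [Fact p.Prime] (v : K → WithTop ℝ) (hv : ValAx p K v) :
    Subring (ℕ → (O p v hv ⧸ pIdeal p v hv)) where
  carrier := {f | ∀ s : ℕ, f (s + 1) ^ p = f s}
  one_mem' := fun s => one_pow p
  mul_mem' := fun {f g} hf hg s => by
    simp only [Pi.mul_apply, mul_pow, hf s, hg s]
  zero_mem' := fun s => zero_pow (Fact.out (p := p.Prime)).ne_zero
  add_mem' := fun {f g} hf hg s => by
    haveI := charP_quotient hv
    simp only [Pi.add_apply, add_pow_char, hf s, hg s]
  neg_mem' := fun {f} hf s => by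
    haveI := charP_quotient hv
    rw [Pi.neg_apply, Pi.neg_apply, show -f (s + 1) = -1 * f (s + 1) by ring, mul_pow,
      neg_one_pow_char, hf s]
    ring

variable (p) [Fact p.Prime] (v)

/-- The `s`-th projection `θ_s : R → O/p`, `x ↦ x⁽ˢ⁾`. -/
def theta (hv : ValAx p K v) (s : ℕ) :
    tilt p v hv →+* (O p v hv ⧸ pIdeal p v hv) :=
  (Pi.evalRingHom _ s).comp (tilt p v hv).subtype

/-- The valuation `v_R` of the tilt: `v_R x = lim_s p^s · v(x̂⁽ˢ⁾)` where `x̂⁽ˢ⁾` is any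
lift of `x⁽ˢ⁾` to `O` (the sequence `p^s · min (v x̂⁽ˢ⁾) (v p)` is nondecreasing and
independent of the choice of lifts, and its limit is its supremum). -/
def vR (hv : ValAx p K v) (x : tilt p v hv) : WithTop ℝ :=
  ⨆ s : ℕ, ((((p : ℝ) ^ s : ℝ)) : WithTop ℝ) *
    min (v ((Function.surjInv Ideal.Quotient.mk_surjective (x.val s) : O p v hv) : K))
        (v (p : K))

/-- The ideal `𝔞 = {x ∈ O : v x > t}` of `O`. -/
def oIdealGT (hv : ValAx p K v) (t : ℝ) : Ideal (O p v hv) where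
  carrier := {x | (t : WithTop ℝ) < v ↑x}
  add_mem' := fun {x y} hx hy =>
    lt_of_lt_of_le (lt_min hx hy) (by push_cast; exact hv.min_le_map_add x y)
  zero_mem' := by
    show (t : WithTop ℝ) < v ((0 : O p v hv) : K)
    push_cast
    rw [(hv.top_iff 0).2 rfl]
    exact WithTop.coe_lt_top t
  smul_mem' := fun a x hx => by
    show (t : WithTop ℝ) < v ((a * x : O p v hv) : K)
    push_cast
    rw [hv.map_mul]
    exact lt_of_lt_of_le hx (le_add_of_nonneg_left a.2)

/-- Since `v p > c/p^s`, the ideal `𝔞 = {v > c/p^s}` contains `p`,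
so `pO ≤ 𝔞` and the projection `O/p → O/𝔞` is defined. -/
theorem pIdeal_le_oIdealGT (hv : ValAx p K v) (c : ℝ) (s : ℕ)
    (hs : (c : WithTop ℝ) < (((p : ℝ) ^ s : ℝ) : WithTop ℝ) * v (p : K)) :
    pIdeal p v hv ≤ oIdealGT p v hv (c / p ^ s) := by
  rw [pIdeal, Ideal.span_le, Set.singleton_subset_iff]
  show ((c / p ^ s : ℝ) : WithTop ℝ) < v ((p : O p v hv) : K)
  push_cast
  rcases eq_or_ne (v (p : K)) ⊤ with h | h
  · rw [h]; exact WithTop.coe_lt_top _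
  · obtain ⟨w, hw⟩ := WithTop.ne_top_iff_exists.mp h
    rw [← hw] at hs ⊢
    have hps : (0 : ℝ) < (p : ℝ) ^ s := by
      have : (0 : ℝ) < (p : ℝ) := by
        exact_mod_cast (Fact.out (p := p.Prime)).pos
      positivity
    have hs' : c < (p : ℝ) ^ s * w := by exact_mod_cast hs
    have hgoal : c / (p : ℝ) ^ s < w := (div_lt_iff₀ hps).2 (by linarith)
    exact_mod_cast hgoal

/-- The Teichmüller representative of `y` in the truncated Witt vector ring `W_n(A)`. -/
def truncTeichmuller (p n : ℕ) [hp : Fact p.Prime] {A : Type*} [CommRing A] (y : A) :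
    TruncatedWittVector p n A :=
  WittVector.truncate n (WittVector.teichmuller p y)

/-- The ring homomorphism `W_n(f) : W_n(A) → W_n(B)` induced by a ring homomorphism
`f : A → B` (componentwise application of `f`). -/
def truncMap (p n : ℕ) [hp : Fact p.Prime] {A B : Type*} [CommRing A] [CommRing B]
    (f : A →+* B) : TruncatedWittVector p n A →+* TruncatedWittVector p n B :=
  RingHom.liftOfRightInverse (WittVector.truncate n) TruncatedWittVector.out
    TruncatedWittVector.truncateFun_out
    ⟨(WittVector.truncate n).comp (WittVector.map f), by
      intro x hx
      rw [WittVector.mem_ker_truncate] at hx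
      rw [RingHom.mem_ker, RingHom.comp_apply, ← RingHom.mem_ker,
        WittVector.mem_ker_truncate]
      intro i hi
      rw [WittVector.map_coeff, hx i hi, map_zero]⟩

variable (n : ℕ)

/-- The ideal `J` of `W_n(O/p)` generated by the Teichmüller representatives `[ȳ]` of
the classes `ȳ ∈ O/p` of elements `y ∈ O` with `v y > t`. -/
def wittOIdeal [Fact p.Prime] (hv : ValAx p K v) (t : ℝ) :
    Ideal (TruncatedWittVector p n (O p v hv ⧸ pIdeal p v hv)) :=
  Ideal.span {z | ∃ y : O p v hv, (t : WithTop ℝ) < v (y : K) ∧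
    z = truncTeichmuller p n (Ideal.Quotient.mk (pIdeal p v hv) y)}

/-- The ideal `[𝔞_R^{>c}]` of `W_n(R)` generated by the Teichmüller representatives of
elements of the tilt `R` of valuation `v_R > c`. -/
def wittTiltIdeal [Fact p.Prime] (hv : ValAx p K v) (c : ℝ) :
    Ideal (TruncatedWittVector p n (tilt p v hv)) :=
  Ideal.span {z | ∃ x : tilt p v hv, (c : WithTop ℝ) < vR p v hv x ∧
    z = truncTeichmuller p n x}

end Tilt

/-!
`θ_s` is surjective because `K` is algebraically closed, so everything rests on the kernel.
For `a ∈ O/p` put `v̄(a) = min (v â) (v p)` (`truncVal`), independent of the lift `â`.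
The approximations `p^j v̄(x⁽ʲ⁾)` of `v_R(x)` satisfy
`p^s v̄(x⁽ˢ⁾) = min (p^j v̄(x⁽ʲ⁾)) (p^s v(p))` for `j ≥ s`, so once `p^s v(p) > c` we get
`v_R(x) > c ⟺ p^s v̄(θ_s x) > c ⟺ θ_s x` is the class of some `y` with `v(y) > c/p^s`.
Hence `W_n(θ_s)` maps `[𝔞_R^{>c}]` onto `J`, and the kernel of the composite is
`[𝔞_R^{>c}] + ker W_n(θ_s)`. A vector in `ker W_n(θ_s)` has coefficients with
`v_R(x_i) ≥ p^s v(p) > p^{n-1} c`, and since `R` is perfect its Teichmüller expansion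
`Σ_{i<n} p^i [x_i^{1/p^i}]` exhibits it as an element of `[𝔞_R^{>c}]`.
-/

section

variable {p : ℕ} {K : Type*} [Field K] {v : K → WithTop ℝ}

theorem ValAx.map_zero (hv : ValAx p K v) : v 0 = ⊤ :=
  (hv.top_iff 0).2 rfl

theorem ValAx.map_pow (hv : ValAx p K v) (x : K) (k : ℕ) : v (x ^ k) = k • v x := by
  induction k with
  | zero => rw [pow_zero, zero_nsmul, Tilt.v_one_eq_zero hv]
  | succ k ih => rw [pow_succ, hv.map_mul, ih, succ_nsmul]

end

namespace Tilt

section Valuation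

variable {p : ℕ} {K : Type*} [Field K] {v : K → WithTop ℝ} {hv : ValAx p K v}

theorem exists_pow_eq_of_isAlgClosed [IsAlgClosed K] (y : O p v hv) {k : ℕ} (hk : k ≠ 0) :
    ∃ r : O p v hv, r ^ k = y := by
  obtain ⟨r, hr⟩ := IsAlgClosed.exists_pow_nat_eq (y : K) (Nat.pos_of_ne_zero hk)
  have hr_nonneg : 0 ≤ v r := by
    by_contra! hneg
    have : v (r ^ k) < 0 := by
      rw [hv.map_pow]
      exact nsmul_neg hneg hk
    exact this.not_ge (hr ▸ y.2)
  exact ⟨⟨r, hr_nonneg⟩, Subtype.ext hr⟩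

theorem min_val_le_of_mk_eq {y y' : O p v hv}
    (h : Ideal.Quotient.mk (pIdeal p v hv) y = Ideal.Quotient.mk (pIdeal p v hv) y') :
    min (v y) (v p) ≤ min (v y') (v p) := by
  obtain ⟨z, hz⟩ := Ideal.mem_span_singleton.mp (Ideal.Quotient.eq.mp h.symm)
  have hy' : (y' : K) = y + p * z := by
    rw [← sub_add_cancel y' y, hz]
    push_cast
    ring
  have hpz : v p ≤ v (p * z : K) := by
    rw [hv.map_mul]
    exact le_add_of_nonneg_right z.2
  refine le_min ?_ (min_le_right _ _)
  rw [hy']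
  exact (min_le_min le_rfl hpz).trans (hv.min_le_map_add _ _)

theorem min_val_eq_of_mk_eq {y y' : O p v hv}
    (h : Ideal.Quotient.mk (pIdeal p v hv) y = Ideal.Quotient.mk (pIdeal p v hv) y') :
    min (v y) (v p) = min (v y') (v p) :=
  (min_val_le_of_mk_eq h).antisymm (min_val_le_of_mk_eq h.symm)

variable (hv) in
def valP : ℝ := (v p).untop hv.vp_ne_top

theorem coe_valP : (valP hv : WithTop ℝ) = v p := WithTop.coe_untop _ _

variable (hv) in
def truncVal (a : O p v hv ⧸ pIdeal p v hv) : ℝ :=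
  (min (v (Function.surjInv Ideal.Quotient.mk_surjective a : O p v hv)) (v p)).untop
    (ne_top_of_le_ne_top hv.vp_ne_top (min_le_right _ _))

theorem coe_truncVal_mk (y : O p v hv) :
    (truncVal hv (Ideal.Quotient.mk _ y) : WithTop ℝ) = min (v y) (v p) := by
  rw [truncVal, WithTop.coe_untop]
  exact min_val_eq_of_mk_eq (Function.surjInv_eq _ _)

theorem truncVal_zero : truncVal hv 0 = valP hv := by
  rw [← WithTop.coe_eq_coe, ← map_zero (Ideal.Quotient.mk (pIdeal p v hv)), coe_truncVal_mk,
    ZeroMemClass.coe_zero, hv.map_zero, coe_valP, min_eq_right le_top]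

theorem truncVal_pow (a : O p v hv ⧸ pIdeal p v hv) {k : ℕ} (hk : k ≠ 0) :
    truncVal hv (a ^ k) = min (k * truncVal hv a) (valP hv) := by
  obtain ⟨y, rfl⟩ := Ideal.Quotient.mk_surjective a
  rw [← WithTop.coe_eq_coe, ← map_pow, coe_truncVal_mk, WithTop.coe_min, coe_valP,
    ← nsmul_eq_mul, WithTop.coe_nsmul, coe_truncVal_mk]
  have hmono : Monotone (k • · : WithTop ℝ → WithTop ℝ) := fun _ _ h => nsmul_le_nsmul_right h k
  rw [SubmonoidClass.coe_pow, hv.map_pow, hmono.map_min, min_assoc,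
    min_eq_right (le_self_nsmul hv.vp_pos.le hk)]

theorem mem_image_mk_iff_lt_truncVal {t : ℝ} (ht : t < valP hv) (a : O p v hv ⧸ pIdeal p v hv) :
    a ∈ Ideal.Quotient.mk _ '' {y : O p v hv | (t : WithTop ℝ) < v y} ↔ t < truncVal hv a := by
  constructor
  · rintro ⟨y, hy, rfl⟩
    rw [← WithTop.coe_lt_coe, coe_truncVal_mk]
    exact lt_min hy (coe_valP (hv := hv) ▸ WithTop.coe_lt_coe.2 ht)
  · intro h
    obtain ⟨y, rfl⟩ := Ideal.Quotient.mk_surjective a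
    rw [← WithTop.coe_lt_coe, coe_truncVal_mk] at h
    exact ⟨y, (lt_min_iff.1 h).1, rfl⟩

end Valuation

section TiltValuation

variable {p : ℕ} [Fact p.Prime] {K : Type*} [Field K] {v : K → WithTop ℝ} {hv : ValAx p K v}

theorem theta_apply (s : ℕ) (x : tilt p v hv) : theta p v hv s x = x.val s := rfl

theorem val_add_pow (x : tilt p v hv) (s d : ℕ) : x.val (s + d) ^ p ^ d = x.val s := by
  induction d with
  | zero => rw [add_zero, pow_zero, pow_one]
  | succ d ih => rw [pow_succ', pow_mul, ← add_assoc, x.2, ih]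

def vRApprox (x : tilt p v hv) (j : ℕ) : ℝ := p ^ j * truncVal hv (x.val j)

theorem vR_eq_iSup (x : tilt p v hv) : vR p v hv x = ⨆ j, (vRApprox x j : WithTop ℝ) := by
  simp only [vR, vRApprox, truncVal, WithTop.coe_mul, WithTop.coe_untop]

theorem vRApprox_eq_min (x : tilt p v hv) (s d : ℕ) :
    vRApprox x s = min (vRApprox x (s + d)) (p ^ s * valP hv) := by
  have hp : p ^ d ≠ 0 := pow_ne_zero d (Fact.out : p.Prime).ne_zero
  rw [vRApprox, ← val_add_pow x s d, truncVal_pow _ hp,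
    mul_min_of_nonneg _ _ (by positivity), vRApprox, pow_add]
  push_cast
  ring_nf

theorem vRApprox_mono (x : tilt p v hv) : Monotone (vRApprox x) := by
  intro s j hsj
  obtain ⟨d, rfl⟩ := Nat.exists_eq_add_of_le hsj
  exact (vRApprox_eq_min x s d).trans_le (min_le_left _ _)

theorem vRApprox_le_vR (x : tilt p v hv) (j : ℕ) : (vRApprox x j : WithTop ℝ) ≤ vR p v hv x := by
  rw [vR_eq_iSup]
  exact le_ciSup (α := WithTop ℝ) (OrderTop.bddAbove _) j

theorem lt_vR_iff (x : tilt p v hv) (c : ℝ) :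
    (c : WithTop ℝ) < vR p v hv x ↔ ∃ j, c < vRApprox x j := by
  rw [vR_eq_iSup, lt_ciSup_iff (α := WithTop ℝ) (OrderTop.bddAbove _)]
  simp only [WithTop.coe_lt_coe]

theorem lt_vR_iff_of_lt {c : ℝ} {s : ℕ} (hs : c < p ^ s * valP hv) (x : tilt p v hv) :
    (c : WithTop ℝ) < vR p v hv x ↔ c < vRApprox x s := by
  refine ⟨fun h => ?_, fun h => (WithTop.coe_lt_coe.2 h).trans_le (vRApprox_le_vR x s)⟩
  obtain ⟨j, hj⟩ := (lt_vR_iff x c).1 h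
  obtain ⟨d, hd⟩ := Nat.exists_eq_add_of_le (le_max_right j s)
  rw [vRApprox_eq_min x s d, ← hd]
  exact lt_min (hj.trans_le (vRApprox_mono x (le_max_left j s))) hs

instance : CharP (O p v hv ⧸ pIdeal p v hv) p := charP_quotient hv

theorem val_pow_p_succ (x : tilt p v hv) (j : ℕ) : (x ^ p).val (j + 1) = x.val j := by
  rw [SubmonoidClass.coe_pow, Pi.pow_apply, x.2]

instance : PerfectRing (tilt p v hv) p where
  bijective_frobenius := by
    refine ⟨fun x y hxy => Subtype.ext (funext fun j => ?_), fun x => ?_⟩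
    · rw [← val_pow_p_succ x, ← val_pow_p_succ y]
      exact congrArg (fun z : tilt p v hv => z.val (j + 1)) hxy
    · exact ⟨⟨fun j => x.val (j + 1), fun j => x.2 (j + 1)⟩,
        Subtype.ext (funext fun j => by rw [SubmonoidClass.coe_pow, Pi.pow_apply]; exact x.2 j)⟩

theorem vRApprox_pow_p_succ (x : tilt p v hv) (j : ℕ) :
    vRApprox (x ^ p) (j + 1) = p * vRApprox x j := by
  rw [vRApprox, val_pow_p_succ, vRApprox, pow_succ']
  ring

theorem lt_vR_of_mul_lt_vR_pow (x : tilt p v hv) {c : ℝ}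
    (h : ((p * c : ℝ) : WithTop ℝ) < vR p v hv (x ^ p)) : (c : WithTop ℝ) < vR p v hv x := by
  obtain ⟨j, hj⟩ := (lt_vR_iff _ _).1 h
  have hj' := hj.trans_le (vRApprox_mono _ j.le_succ)
  rw [vRApprox_pow_p_succ] at hj'
  exact (lt_vR_iff _ _).2 ⟨j, lt_of_mul_lt_mul_left hj' (Nat.cast_nonneg p)⟩

theorem lt_vR_frobeniusEquiv_symm_pow {c : ℝ} (i : ℕ) (x : tilt p v hv)
    (h : (((p : ℝ) ^ i * c : ℝ) : WithTop ℝ) < vR p v hv x) :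
    (c : WithTop ℝ) < vR p v hv (((frobeniusEquiv (tilt p v hv) p).symm ^ i) x) := by
  induction i generalizing x with
  | zero => simpa using h
  | succ i ih =>
    rw [pow_succ, RingAut.mul_apply]
    refine ih _ (lt_vR_of_mul_lt_vR_pow _ ?_)
    rwa [frobeniusEquiv_symm_pow_p, ← mul_assoc, ← pow_succ']

theorem theta_surjective [IsAlgClosed K] (s : ℕ) : Function.Surjective (theta p v hv s) := by
  have hroot (a : O p v hv ⧸ pIdeal p v hv) : ∃ b, b ^ p = a := by
    obtain ⟨y, rfl⟩ := Ideal.Quotient.mk_surjective a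
    obtain ⟨r, hr⟩ := exists_pow_eq_of_isAlgClosed y (Fact.out : p.Prime).ne_zero
    exact ⟨Ideal.Quotient.mk _ r, by rw [← map_pow, hr]⟩
  choose ρ hρ using hroot
  intro a
  let x : tilt p v hv := ⟨fun j => ρ^[j] a, fun j => by
    simp only [Function.iterate_succ_apply', hρ]⟩
  refine ⟨x ^ p ^ s, ?_⟩
  rw [theta_apply, SubmonoidClass.coe_pow, Pi.pow_apply]
  have hx := val_add_pow x 0 s
  rw [zero_add] at hx
  exact hx

theorem theta_image_setOf_lt_vR [IsAlgClosed K] {c : ℝ} {s : ℕ} (hs : c < p ^ s * valP hv) :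
    theta p v hv s '' {x | (c : WithTop ℝ) < vR p v hv x} =
      Ideal.Quotient.mk _ '' {y : O p v hv | ((c / p ^ s : ℝ) : WithTop ℝ) < v y} := by
  have hps : (0 : ℝ) < p ^ s := pow_pos (Nat.cast_pos.2 (Fact.out : p.Prime).pos) s
  ext a
  rw [mem_image_mk_iff_lt_truncVal ((div_lt_iff₀' hps).2 hs), div_lt_iff₀' hps]
  constructor
  · rintro ⟨x, hx, rfl⟩
    exact (lt_vR_iff_of_lt hs x).1 hx
  · intro h
    obtain ⟨x, rfl⟩ := theta_surjective s a
    exact ⟨x, (lt_vR_iff_of_lt hs x).2 h, rfl⟩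

end TiltValuation

section TruncatedWittVector

variable {p : ℕ} [Fact p.Prime] {n : ℕ} {A B : Type*} [CommRing A] [CommRing B]

theorem truncMap_truncate (f : A →+* B) (x : WittVector p A) :
    truncMap p n f (WittVector.truncate n x) = WittVector.truncate n (WittVector.map f x) :=
  RingHom.liftOfRightInverse_comp_apply _ _ _ _ x

theorem coeff_truncMap (f : A →+* B) (w : TruncatedWittVector p n A) (i : Fin n) :
    (truncMap p n f w).coeff i = f (w.coeff i) := by
  obtain ⟨x, rfl⟩ := WittVector.truncate_surjective p n A w
  rw [truncMap_truncate, WittVector.coeff_truncate, WittVector.map_coeff, WittVector.coeff_truncate]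

theorem truncMap_surjective {f : A →+* B} (hf : Function.Surjective f) :
    Function.Surjective (truncMap p n f) := by
  intro w
  choose g hg using fun i => hf (w.coeff i)
  exact ⟨TruncatedWittVector.mk p g, TruncatedWittVector.ext fun i => by
    rw [coeff_truncMap, TruncatedWittVector.coeff_mk, hg]⟩

theorem truncMap_truncTeichmuller (f : A →+* B) (a : A) :
    truncMap p n f (truncTeichmuller p n a) = truncTeichmuller p n (f a) := by
  rw [truncTeichmuller, truncMap_truncate, WittVector.map_teichmuller, truncTeichmuller]

theorem truncate_eq_sum_truncTeichmuller [CharP A p] [PerfectRing A p] (x : WittVector p A)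
    (m : ℕ) : WittVector.truncate (m + 1) x = ∑ i ∈ Finset.Iic m,
      truncTeichmuller p (m + 1) (((frobeniusEquiv A p).symm ^ i) (x.coeff i)) * p ^ i := by
  obtain ⟨d, hd⟩ := WittVector.dvd_sub_sum_teichmuller_iterateFrobeniusEquiv_coeff x m
  have hzero : WittVector.truncate (m + 1) ((p : WittVector p A) ^ (m + 1) * d) = 0 := by
    rw [← RingHom.mem_ker, WittVector.mem_ker_truncate]
    intro i hi
    rw [mul_comm]
    exact WittVector.mul_pow_charP_coeff_zero d hi
  rw [← hd, map_sub, sub_eq_zero, map_sum] at hzero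
  simp only [hzero, map_mul, map_pow, map_natCast, truncTeichmuller]

end TruncatedWittVector

section Ideals

variable {p : ℕ} [Fact p.Prime] {K : Type*} [Field K] {v : K → WithTop ℝ} {hv : ValAx p K v}

theorem map_truncMap_theta_wittTiltIdeal [IsAlgClosed K] (n : ℕ) {c : ℝ} {s : ℕ}
    (hs : c < p ^ s * valP hv) :
    (wittTiltIdeal p v n hv c).map (truncMap p n (theta p v hv s)) =
      wittOIdeal p v n hv (c / p ^ s) := by
  have hI : wittTiltIdeal p v n hv c =
      Ideal.span (truncTeichmuller p n '' {x | (c : WithTop ℝ) < vR p v hv x}) := by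
    rw [wittTiltIdeal]
    congr 1
    ext z
    exact ⟨fun ⟨x, hx, h⟩ => ⟨x, hx, h.symm⟩, fun ⟨x, hx, h⟩ => ⟨x, hx, h.symm⟩⟩
  have hJ : wittOIdeal p v n hv (c / p ^ s) = Ideal.span (truncTeichmuller p n ''
      (Ideal.Quotient.mk _ '' {y : O p v hv | ((c / p ^ s : ℝ) : WithTop ℝ) < v y})) := by
    rw [wittOIdeal, Set.image_image]
    congr 1
    ext z
    exact ⟨fun ⟨y, hy, h⟩ => ⟨y, hy, h.symm⟩, fun ⟨y, hy, h⟩ => ⟨y, hy, h.symm⟩⟩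
  rw [hI, hJ, Ideal.map_span, Set.image_image, ← theta_image_setOf_lt_vR hs, Set.image_image]
  simp only [truncMap_truncTeichmuller]

theorem ker_truncMap_theta_le_wittTiltIdeal {c : ℝ} (hc : 0 ≤ c) {n s : ℕ} (hn : 1 ≤ n)
    (hs : p ^ (n - 1) * c < p ^ s * valP hv) :
    RingHom.ker (truncMap p n (theta p v hv s)) ≤ wittTiltIdeal p v n hv c := by
  obtain ⟨m, rfl⟩ := Nat.exists_eq_add_of_le' hn
  intro w hw
  obtain ⟨x, rfl⟩ := WittVector.truncate_surjective p _ _ w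
  have hcoeff (i : ℕ) (hi : i ≤ m) :
      (((p : ℝ) ^ i * c : ℝ) : WithTop ℝ) < vR p v hv (x.coeff i) := by
    have hθ : theta p v hv s (x.coeff i) = 0 := by
      have := congrArg (TruncatedWittVector.coeff ⟨i, by omega⟩) (RingHom.mem_ker.1 hw)
      rwa [coeff_truncMap, WittVector.coeff_truncate, TruncatedWittVector.coeff_zero] at this
    refine lt_of_lt_of_le ?_ (vRApprox_le_vR _ s)
    rw [WithTop.coe_lt_coe, vRApprox, ← theta_apply, hθ, truncVal_zero]
    refine lt_of_le_of_lt (mul_le_mul_of_nonneg_right ?_ hc) hs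
    exact pow_le_pow_right₀ (by exact_mod_cast (Fact.out : p.Prime).one_le) (by omega)
  rw [truncate_eq_sum_truncTeichmuller]
  exact Ideal.sum_mem _ fun i hi => Ideal.mul_mem_right _ _ (Ideal.subset_span
    ⟨_, lt_vR_frobeniusEquiv_symm_pow i _ (hcoeff i (Finset.mem_Iic.1 hi)), rfl⟩)

/-- For `n ≥ 1` and `p^{s-n+1}·v(p) > c` (i.e.
`p^{n-1}·c < p^s·v(p)`), the composite
`W_n(R) → W_n(O/p) → W_n(O/p)/J` induced by `θ_s` is surjective with kernel
`[𝔞_R^{>c}]`; hence it induces a ring isomorphism `W_n(R)/[𝔞_R^{>c}] ≅ W_n(O/p)/J`. -/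
theorem truncMap_theta_surjective_and_ker (K : Type*) [Field K] [IsAlgClosed K]
    (p : ℕ) [Fact p.Prime] (v : K → WithTop ℝ) (hv : ValAx p K v)
    (c : ℝ) (hc : 0 < c) (n s : ℕ) (hn : 1 ≤ n)
    (hs : (((p : ℝ) ^ (n - 1) * c : ℝ) : WithTop ℝ) <
      (((p : ℝ) ^ s : ℝ) : WithTop ℝ) * v (p : K)) :
    Function.Surjective
      ((Ideal.Quotient.mk (wittOIdeal p v n hv (c / p ^ s))).comp
        (truncMap p n (theta p v hv s))) ∧
    RingHom.ker
      ((Ideal.Quotient.mk (wittOIdeal p v n hv (c / p ^ s))).comp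
        (truncMap p n (theta p v hv s))) = wittTiltIdeal p v n hv c ∧
    Nonempty
      ((TruncatedWittVector p n (tilt p v hv) ⧸ wittTiltIdeal p v n hv c) ≃+*
        (TruncatedWittVector p n (O p v hv ⧸ pIdeal p v hv) ⧸
          wittOIdeal p v n hv (c / p ^ s))) := by
  rw [← coe_valP (hv := hv), ← WithTop.coe_mul, WithTop.coe_lt_coe] at hs
  have hcs : c < p ^ s * valP hv := lt_of_le_of_lt
    (le_mul_of_one_le_left hc.le (one_le_pow₀ (by exact_mod_cast (Fact.out : p.Prime).one_le))) hs
  have hf : Function.Surjective (truncMap p n (theta p v hv s)) :=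
    truncMap_surjective (theta_surjective s)
  have hsurj : Function.Surjective ((Ideal.Quotient.mk (wittOIdeal p v n hv (c / p ^ s))).comp
      (truncMap p n (theta p v hv s))) := Ideal.Quotient.mk_surjective.comp hf
  have hker : RingHom.ker ((Ideal.Quotient.mk (wittOIdeal p v n hv (c / p ^ s))).comp
      (truncMap p n (theta p v hv s))) = wittTiltIdeal p v n hv c := by
    rw [← RingHom.comap_ker, Ideal.mk_ker, ← map_truncMap_theta_wittTiltIdeal n hcs,
      Ideal.comap_map_of_surjective _ hf, ← RingHom.ker_eq_comap_bot,
      sup_eq_left.2 (ker_truncMap_theta_le_wittTiltIdeal hc.le hn hs)]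
  exact ⟨hsurj, hker, ⟨(Ideal.quotEquivOfEq hker.symm).trans
    (RingHom.quotientKerEquivOfSurjective hsurj)⟩⟩

end Ideals

end Tilt
end
end
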